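/- Let X be a compact Hausdorff space, A a closed linear sublattice of C(X), and f ∈ C(X). If for every pair of points x, y ∈ X there exists g ∈ A with g(x) = f(x) and g(y) = f(y), then f ∈ A. -/

import Mathlib

/-! Kakutani's argument. Fix `ε > 0` and `x`. The interpolants `g_y` (equal to `f` at `x` and
at `y`) exceed `f - ε` near `y`; finitely many such neighbourhoods cover `X`, and the sup of the
corresponding `g_y` lies in `A`, equals `f` at `x` and exceeds `f - ε` everywhere. Such a function
is below `f + ε` near `x`, so the inf of finitely many of them is uniformly `ε`-close to `f`.
As `A` is closed, `f ∈ A`. -/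

open scoped Topology

section

variable {X : Type*} [TopologicalSpace X] [CompactSpace X] [Nonempty X]

theorem CompactSpace.exists_finset_nonempty_forall_mem_of_nhds {U : X → Set X}
    (hU : ∀ y, U y ∈ 𝓝 y) :
    ∃ s : Finset X, s.Nonempty ∧ ∀ z, ∃ y ∈ s, z ∈ U y := by
  obtain ⟨s, hs⟩ := CompactSpace.elim_nhds_subcover U hU
  have hcover : ∀ z, ∃ y ∈ s, z ∈ U y := fun z => by
    simpa using (Set.ext_iff.1 hs z).2 trivial
  obtain ⟨y, hy, -⟩ := hcover (Classical.arbitrary X)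
  exact ⟨s, ⟨y, hy⟩, hcover⟩

namespace ContinuousMap

theorem exists_mem_forall_lt_of_sup_mem {L : Set C(X, ℝ)}
    (hsup : ∀ f ∈ L, ∀ g ∈ L, f ⊔ g ∈ L) {φ : X → ℝ} (hφ : Continuous φ)
    (h : ∀ y, ∃ g ∈ L, φ y < g y) : ∃ g ∈ L, ∀ z, φ z < g z := by
  choose g hgL hg using h
  obtain ⟨s, hs, hcover⟩ :=
    CompactSpace.exists_finset_nonempty_forall_mem_of_nhds (U := fun y => {z | φ z < g y z})
    fun y => (isOpen_lt hφ (g y).continuous).mem_nhds (hg y)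
  refine ⟨s.sup' hs g, Finset.sup'_mem L hsup s hs g fun y _ => hgL y, fun z => ?_⟩
  obtain ⟨y, hy, hz⟩ := hcover z
  simpa only [sup'_apply, Finset.lt_sup'_iff] using ⟨y, hy, hz⟩

theorem exists_mem_forall_gt_of_inf_mem {L : Set C(X, ℝ)}
    (hinf : ∀ f ∈ L, ∀ g ∈ L, f ⊓ g ∈ L) {φ : X → ℝ} (hφ : Continuous φ)
    (h : ∀ y, ∃ g ∈ L, g y < φ y) : ∃ g ∈ L, ∀ z, g z < φ z := by
  choose g hgL hg using h
  obtain ⟨s, hs, hcover⟩ :=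
    CompactSpace.exists_finset_nonempty_forall_mem_of_nhds (U := fun y => {z | g y z < φ z})
    fun y => (isOpen_lt (g y).continuous hφ).mem_nhds (hg y)
  refine ⟨s.inf' hs g, Finset.inf'_mem L hinf s hs g fun y _ => hgL y, fun z => ?_⟩
  obtain ⟨y, hy, hz⟩ := hcover z
  simpa only [inf'_apply, Finset.inf'_lt_iff] using ⟨y, hy, hz⟩

end ContinuousMap

end

open ContinuousMap in
theorem stmt_4_general (X : Type*) [TopologicalSpace X] [CompactSpace X]
    (A : Submodule ℝ C(X, ℝ)) (hclosed : IsClosed (A : Set C(X, ℝ)))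
    (hsup : ∀ f g : C(X, ℝ), f ∈ A → g ∈ A → f ⊔ g ∈ A)
    (hinf : ∀ f g : C(X, ℝ), f ∈ A → g ∈ A → f ⊓ g ∈ A)
    (f : C(X, ℝ))
    (h : ∀ x y : X, ∃ g ∈ A, g x = f x ∧ g y = f y) :
    f ∈ A := by
  rcases isEmpty_or_nonempty X with hX | hX
  · exact Subsingleton.elim f 0 ▸ A.zero_mem
  rw [← SetLike.mem_coe, ← hclosed.closure_eq, Metric.mem_closure_iff]
  intro ε hε
  have above : ∀ x, ∃ g ∈ {g ∈ A | g x = f x}, ∀ z, f z - ε < g z := fun x =>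
    exists_mem_forall_lt_of_sup_mem (L := {g ∈ A | g x = f x})
      (fun g₁ hg₁ g₂ hg₂ => ⟨hsup g₁ g₂ hg₁.1 hg₂.1, by simp [hg₁.2, hg₂.2]⟩)
      (φ := fun z => f z - ε) (by fun_prop)
      fun y => by
        obtain ⟨g, hgA, hgx, hgy⟩ := h x y
        exact ⟨g, ⟨hgA, hgx⟩, by linarith⟩
  obtain ⟨k, ⟨hkA, hk_above⟩, hk_below⟩ :=
    exists_mem_forall_gt_of_inf_mem (L := {g ∈ A | ∀ z, f z - ε < g z})
      (fun g₁ hg₁ g₂ hg₂ => ⟨hinf g₁ g₂ hg₁.1 hg₂.1, fun z => lt_min (hg₁.2 z) (hg₂.2 z)⟩)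
      (φ := fun z => f z + ε) (by fun_prop) fun x => by
        obtain ⟨g, ⟨hgA, hgx⟩, hg⟩ := above x
        exact ⟨g, ⟨hgA, hg⟩, by linarith⟩
  refine ⟨k, hkA, (dist_lt_iff hε).2 fun z => ?_⟩
  rw [Real.dist_eq, abs_sub_lt_iff]
  constructor <;> linarith [hk_above z, hk_below z]

theorem stmt_4 (X : Type*) [TopologicalSpace X] [CompactSpace X] [T2Space X]
    (A : Submodule ℝ C(X, ℝ)) (hclosed : IsClosed (A : Set C(X, ℝ)))
    (hsup : ∀ f g : C(X, ℝ), f ∈ A → g ∈ A → f ⊔ g ∈ A)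
    (hinf : ∀ f g : C(X, ℝ), f ∈ A → g ∈ A → f ⊓ g ∈ A)
    (f : C(X, ℝ))
    (h : ∀ x y : X, ∃ g ∈ A, g x = f x ∧ g y = f y) :
    f ∈ A :=
  stmt_4_general X A hclosed hsup hinf f h
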